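/- Let (Z, E) be a reflexive graph whose relation E is antisymmetric, and suppose the concept lattice of the associated polarity (Z, Z, I_{Eᶜ}) satisfies the completely distributive law. Then for every u ∈ Z, u_r = ⨆ {w_s | w ∈ Z, ¬(u_s ≤ w_s)} in the concept lattice. -/

import Mathlib

open Set

universe u v

/-- The object concept `z_s = ({z}^{↑↓}, {z}^↑)`. -/
def objectConcept {A X : Type*} (I : A → X → Prop) (a : A) : Concept A X I where
  extent := lowerPolar I (upperPolar I {a})
  intent := upperPolar I {a}
  upperPolar_extent := upperPolar_lowerPolar_upperPolar (r := I) {a}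
  lowerPolar_intent := rfl

/-- The attribute concept `z_r = ({z}^↓, {z}^{↓↑})`. -/
def attributeConcept {A X : Type*} (I : A → X → Prop) (x : X) : Concept A X I where
  extent := lowerPolar I {x}
  intent := upperPolar I (lowerPolar I {x})
  upperPolar_extent := rfl
  lowerPolar_intent := lowerPolar_upperPolar_lowerPolar (r := I) {x}

/-!
Complete distributivity implies distributivity, and in the concept lattice of a reflexive
antisymmetric graph distributivity forces `E` to be transitive: if `E w u` and `E u x` but
`¬ E w x`, then `u_s ≤ u_s ⊓ (w_s ⊔ u_r)` while `(u_s ⊓ w_s) ⊔ (u_s ⊓ u_r) ≤ u_r`, and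
`u_s ≰ u_r` because `E u u`. Once `E` is a preorder, `u_s ≤ w_s ↔ E w u`, so the join in question
is the join of the object concepts of the extent `{w | ¬ E w u}` of `u_r`, which is `u_r`.
-/

theorem inf_sup_le_of_iInf_iSup_eq {α : Type*} [CompleteLattice α]
    (h : ∀ (ι : Type u) (κ : ι → Type v) (f : (i : ι) → κ i → α),
      ⨅ i, ⨆ j, f i j = ⨆ g : (i : ι) → κ i, ⨅ i, f i (g i)) (a b c : α) :
    a ⊓ (b ⊔ c) ≤ a ⊓ b ⊔ a ⊓ c := by
  have key := h (ULift Bool) (fun _ => ULift Bool) fun i j => cond i.down a (cond j.down b c)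
  simp only [iInf_ulift, iSup_ulift, iInf_bool_eq, iSup_bool_eq, cond_true, cond_false,
    sup_idem] at key
  rw [key]
  refine iSup_le fun g => ?_
  cases (g ⟨false⟩).down
  exacts [le_sup_right, le_sup_left]

namespace Concept

variable {α β : Type*} {r : α → β → Prop}

theorem objectConcept_eq_ofObject (a : α) : objectConcept r a = ofObject r a := rfl

theorem attributeConcept_eq_ofAttribute (b : β) : attributeConcept r b = ofAttribute r b := rfl

theorem sSup_image_ofObject (s : Set α) : sSup (ofObject r '' s) = ofObjects r s := by
  refine ext' ?_
  ext b
  simp [mem_upperPolar_iff]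

theorem ofObject_le_ofObject_iff {a a' : α} :
    ofObject r a ≤ ofObject r a' ↔ ∀ b, r a' b → r a b := by
  simp [mem_lowerPolar_iff, mem_upperPolar_iff]

theorem ofAttribute_le_ofAttribute_iff {b b' : β} :
    ofAttribute r b ≤ ofAttribute r b' ↔ ∀ a, r a b → r a b' := by
  simp [mem_lowerPolar_iff, mem_upperPolar_iff]

theorem ofObject_le_iff_forall_le_ofAttribute {a : α} {c : Concept α β r} :
    ofObject r a ≤ c ↔ ∀ b, c ≤ ofAttribute r b → r a b := by
  rw [ofObjects_le_iff, singleton_subset_iff, ← c.lowerPolar_intent]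
  simp only [le_ofAttributes_iff, singleton_subset_iff, mem_lowerPolar_iff]

theorem le_ofAttribute_iff_forall_ofObject_le {b : β} {c : Concept α β r} :
    c ≤ ofAttribute r b ↔ ∀ a, ofObject r a ≤ c → r a b := by
  rw [le_ofAttributes_iff, singleton_subset_iff, ← c.upperPolar_extent]
  simp only [ofObjects_le_iff, singleton_subset_iff, mem_upperPolar_iff]

end Concept

section ReflexiveGraph

open Concept

variable {Z : Type*} {E : Z → Z → Prop}

theorem ofObject_le_sup_ofAttribute [Std.Refl E] [Std.Antisymm E] {u w : Z} (hwu : E w u) :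
    ofObject (fun a x => ¬ E a x) u ≤
      ofObject (fun a x => ¬ E a x) w ⊔ ofAttribute (fun a x => ¬ E a x) u := by
  rw [ofObject_le_iff_forall_le_ofAttribute]
  intro y hy hEuy
  obtain ⟨hwy, huy⟩ := sup_le_iff.1 hy
  have hyu : E y u := by
    by_contra hyu
    exact ofAttribute_le_ofAttribute_iff.1 huy y hyu (refl_of E y)
  obtain rfl := antisymm hEuy hyu
  exact ofObject_le_ofAttribute_iff.1 hwy hwu

theorem inf_ofObject_le_ofAttribute [Std.Refl E] [Std.Antisymm E] {u w x : Z}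
    (hux : E u x) (hwx : ¬ E w x) :
    ofObject (fun a x => ¬ E a x) u ⊓ ofObject (fun a x => ¬ E a x) w ≤
      ofAttribute (fun a x => ¬ E a x) u := by
  rw [le_ofAttribute_iff_forall_ofObject_le]
  intro a ha hEau
  obtain ⟨hau, haw⟩ := le_inf_iff.1 ha
  have hua : E u a := by
    by_contra hua
    exact ofObject_le_ofObject_iff.1 hau a hua (refl_of E a)
  obtain rfl := antisymm hEau hua
  exact ofObject_le_ofObject_iff.1 haw x hwx hux

theorem isTrans_of_inf_sup_le [Std.Refl E] [Std.Antisymm E]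
    (hdistrib : ∀ a b c : Concept Z Z (fun a x => ¬ E a x), a ⊓ (b ⊔ c) ≤ a ⊓ b ⊔ a ⊓ c) :
    IsTrans Z E := by
  refine ⟨fun w u x hwu hux => ?_⟩
  by_contra hwx
  set us := ofObject (fun a x => ¬ E a x) u
  set ws := ofObject (fun a x => ¬ E a x) w
  set ur := ofAttribute (fun a x => ¬ E a x) u
  have : us ≤ ur := calc
    us ≤ us ⊓ (ws ⊔ ur) := le_inf le_rfl (ofObject_le_sup_ofAttribute hwu)
    _ ≤ us ⊓ ws ⊔ us ⊓ ur := hdistrib us ws ur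
    _ ≤ ur := sup_le (inf_ofObject_le_ofAttribute hux hwx) inf_le_right
  exact ofObject_le_ofAttribute_iff.1 this (refl_of E u)

theorem ofObject_le_ofObject_iff_of_isTrans [Std.Refl E] [IsTrans Z E] {u w : Z} :
    ofObject (fun a x => ¬ E a x) u ≤ ofObject (fun a x => ¬ E a x) w ↔ E w u := by
  rw [ofObject_le_ofObject_iff]
  refine ⟨fun h => ?_, fun hwu x hwx hux => hwx (trans_of E hwu hux)⟩
  by_contra hwu
  exact h u hwu (refl_of E u)

end ReflexiveGraph

/-- If `(Z, E)` is a reflexive, antisymmetric graph whose associated concept lattice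
satisfies the completely distributive law, then for every `u ∈ Z`,
`u_r = ⨆ {w_s | w ∈ Z, ¬ u_s ≤ w_s}`. -/
theorem attributeConcept_eq_sSup {Z : Type*} (E : Z → Z → Prop)
    (hrefl : Reflexive E)
    (hanti : ∀ z z' : Z, E z z' → E z' z → z = z')
    (hdist : ∀ (ι : Type u) (κ : ι → Type v)
      (f : (i : ι) → κ i → Concept Z Z (fun a x => ¬ E a x)),
      ⨅ i, ⨆ j, f i j = ⨆ g : (i : ι) → κ i, ⨅ i, f i (g i)) :
    ∀ u : Z, attributeConcept (fun a x => ¬ E a x) u =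
      sSup {c : Concept Z Z (fun a x => ¬ E a x) | ∃ w : Z,
        c = objectConcept (fun a x => ¬ E a x) w ∧
        ¬ objectConcept (fun a x => ¬ E a x) u ≤ objectConcept (fun a x => ¬ E a x) w} := by
  have : Std.Refl E := ⟨hrefl⟩
  have : Std.Antisymm E := ⟨hanti⟩
  have : IsTrans Z E := isTrans_of_inf_sup_le (inf_sup_le_of_iInf_iSup_eq hdist)
  intro u
  have hS : {c : Concept Z Z (fun a x => ¬ E a x) | ∃ w : Z,
        c = objectConcept (fun a x => ¬ E a x) w ∧
        ¬ objectConcept (fun a x => ¬ E a x) u ≤ objectConcept (fun a x => ¬ E a x) w} =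
      Concept.ofObject _ '' (Concept.ofAttribute (fun a x => ¬ E a x) u).extent := by
    ext c
    simp only [Concept.objectConcept_eq_ofObject, ofObject_le_ofObject_iff_of_isTrans,
      mem_ofPred_eq, mem_image, Concept.extent_ofAttributes, mem_lowerPolar_singleton]
    exact exists_congr fun w => by rw [eq_comm, and_comm]
  rw [hS, Concept.sSup_image_ofObject, Concept.ofObjects_extent,
    Concept.attributeConcept_eq_ofAttribute]
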